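/- Let m be a prime number, let (k,δ) be a differential field containing a primitive m-th root of unity ω with char k not dividing m, and let A = (α,β)_{k,ω} be a symbol algebra of degree m with standard derivation d_s, where α and β do not lie in C_{k,δ}·(k^×)^m (i.e. there are no c, x ∈ k with δ(c) = 0 and α = c·x^m, and likewise for β). Let L be a field extension of k of degree m generated over k by an element γ with γ^m = ν·1 for some ν ∈ k^× (by Kummer theory, every cyclic extension of k of degree m has this form), and let δ_L be the derivation on L extending δ. Suppose there is an L-algebra isomorphism ψ : L ⊗_k A → M_m(L) such that for all e ∈ L and a ∈ A, applying δ_L to each entry of ψ(e ⊗ a) yields ψ(δ_L(e) ⊗ a + e ⊗ d_s(a)). Then there exist λ, μ ∈ k with δ(λ) = 0 and δ(μ) = 0, and elements ξ, η ∈ L, such that ξ^m = λ·α, η^m = μ·β, and each of ξ and η generates L over k (L = k(ξ) = k(η)). -/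

import Mathlib

open scoped TensorProduct
open IntermediateField

section Der
variable {K : Type*} [Field K] {d : K → K}
  (ha : ∀ x y : K, d (x + y) = d x + d y)
  (hml : ∀ x y : K, d (x * y) = x * d y + d x * y)
include ha hml

omit ha in
lemma d_one' : d 1 = 0 := by
  have := hml 1 1; simp at this; exact this

omit hml in
lemma d_zero' : d 0 = 0 := by
  have := ha 0 0; simp at this; exact this

omit ha in
lemma d_pow_succ' : ∀ (n : ℕ) (x : K), d (x ^ (n + 1)) = ((n + 1 : ℕ) : K) * x ^ n * d x := by
  intro n
  induction n with
  | zero => intro x; simp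
  | succ n ih =>
    intro x
    have h : x ^ (n + 2) = x ^ (n + 1) * x := by ring
    rw [h, hml, ih]; push_cast; ring

omit ha in
lemma d_pow_mul' : ∀ (n : ℕ) (x : K), d (x ^ n) * x = (n : K) * x ^ n * d x := by
  intro n x
  cases n with
  | zero => simp [d_one' hml]
  | succ n => rw [d_pow_succ' hml]; push_cast; ring

omit ha in
lemma d_inv' {x : K} (hx : x ≠ 0) : d x⁻¹ * x ^ 2 = - d x := by
  have h0 : x * d x⁻¹ + d x * x⁻¹ = 0 := by
    have h1 : d (x * x⁻¹) = 0 := by rw [mul_inv_cancel₀ hx, d_one' hml]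
    rw [hml] at h1; exact h1
  linear_combination x * h0 - d x * mul_inv_cancel₀ hx

omit hml in
lemma d_sum' {ι : Type*} (s : Finset ι) (f : ι → K) :
    d (∑ i ∈ s, f i) = ∑ i ∈ s, d (f i) := by
  classical
  induction s using Finset.induction with
  | empty => simpa using d_zero' ha
  | @insert a s h ih => rw [Finset.sum_insert h, Finset.sum_insert h, ha, ih]
end Der

lemma aux_main {k : Type*} [Field k] {m : ℕ} (hm : Nat.Prime m) (hchar : (m : k) ≠ 0)
    {δ : k → k}
    (hδa : ∀ x y : k, δ (x + y) = δ x + δ y)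
    (hδm : ∀ x y : k, δ (x * y) = x * δ y + δ x * y)
    {L : Type*} [Field L] [Algebra k L]
    (hLdim : Module.finrank k L = m)
    {γ : L} {ν : k} (hν : ν ≠ 0)
    (hγ : γ ^ m = algebraMap k L ν)
    (hγgen : IntermediateField.adjoin k ({γ} : Set L) = ⊤)
    {δL : L → L}
    (hLa : ∀ x y : L, δL (x + y) = δL x + δL y)
    (hLm : ∀ x y : L, δL (x * y) = x * δL y + δL x * y)
    (hLext : ∀ c : k, δL (algebraMap k L c) = algebraMap k L (δ c))
    {θ : k} (hθ : θ ≠ 0)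
    (hθn : ¬ ∃ c x : k, δ c = 0 ∧ θ = c * x ^ m)
    {s : L} (hs : s ≠ 0)
    (hds : δL s = algebraMap k L (δ θ / ((m : k) * θ)) * s) :
    ∃ (lam : k) (ξ : L), δ lam = 0 ∧ ξ ^ m = algebraMap k L (lam * θ) ∧
      IntermediateField.adjoin k ({ξ} : Set L) = ⊤ := by
  classical
  have hm2 : 2 ≤ m := hm.two_le
  haveI : FiniteDimensional k L :=
    FiniteDimensional.of_finrank_pos (hLdim ▸ hm.pos)
  have hγ0 : γ ≠ 0 := by
    intro h
    apply hν
    have : (0 : L) = algebraMap k L ν := by rw [← hγ, h, zero_pow hm.ne_zero]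
    exact (map_eq_zero _).mp this.symm
  have hγint : IsIntegral k γ := IsIntegral.of_finite k γ
  -- minpoly degree = m
  have hdeg : (minpoly k γ).natDegree = m := by
    have h1 : Module.finrank k (IntermediateField.adjoin k ({γ} : Set L)) =
        (minpoly k γ).natDegree := IntermediateField.adjoin.finrank hγint
    rw [hγgen] at h1
    rw [← h1, IntermediateField.finrank_top', hLdim]
  -- power basis
  have li : LinearIndependent k fun i : Fin m => γ ^ (i : ℕ) := by
    have := linearIndependent_pow (K := k) γ
    rwa [hdeg] at this
  haveI : Nonempty (Fin m) := ⟨⟨0, hm.pos⟩⟩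
  set B : Module.Basis (Fin m) k L :=
    basisOfLinearIndependentOfCardEqFinrank li (by simp [hLdim]) with hB
  have hBapp : ∀ i : Fin m, B i = γ ^ (i : ℕ) := by
    intro i; rw [hB, coe_basisOfLinearIndependentOfCardEqFinrank]
  -- derivative of γ
  have hmL : ((m : ℕ) : L) ≠ 0 := by
    have h2 : algebraMap k L (m : k) ≠ 0 := fun h => hchar ((map_eq_zero _).mp h)
    rwa [map_natCast] at h2
  -- derivative of γ
  set cν : k := δ ν / ((m : k) * ν) with hcν
  have hdγ : δL γ = algebraMap k L cν * γ := by
    have h1 : δL (γ ^ m) = algebraMap k L (δ ν) := by rw [hγ, hLext]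
    obtain ⟨m', hm'⟩ : ∃ m', m = m' + 1 := ⟨m - 1, by omega⟩
    rw [hm', d_pow_succ' hLm] at h1
    rw [← hm'] at h1
    have hne : ((m : ℕ) : L) * γ ^ m' ≠ 0 := mul_ne_zero hmL (pow_ne_zero _ hγ0)
    have h3 : γ ^ m' * γ = algebraMap k L ν := by rw [← pow_succ, ← hm', hγ]
    have h4 : ((m : ℕ) : L) = algebraMap k L ((m : ℕ) : k) := (map_natCast _ m).symm
    have h2 : ((m : ℕ) : L) * γ ^ m' * (algebraMap k L cν * γ) = algebraMap k L (δ ν) := by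
      calc ((m : ℕ) : L) * γ ^ m' * (algebraMap k L cν * γ)
          = ((m : ℕ) : L) * algebraMap k L cν * (γ ^ m' * γ) := by ring
        _ = algebraMap k L ((m : k) * cν * ν) := by
            rw [h3, h4, ← map_mul, ← map_mul]
        _ = algebraMap k L (δ ν) := by rw [hcν]; congr 1; field_simp
    exact mul_left_cancel₀ hne (h1.trans h2.symm)
  have hdγpow : ∀ n : ℕ, δL (γ ^ n) = algebraMap k L ((n : k) * cν) * γ ^ n := by
    intro n
    induction n with
    | zero => simp [d_one' hLm]
    | succ n ih =>
      rw [pow_succ, hLm, hdγ, ih]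
      push_cast [map_mul, map_add, map_natCast]
      ring
  -- decomposition of s
  set e : Fin m → k := fun j => B.repr s j with he
  have hsum : s = ∑ j : Fin m, algebraMap k L (e j) * γ ^ (j : ℕ) := by
    conv_lhs => rw [← B.sum_repr s]
    apply Finset.sum_congr rfl
    intro j _
    rw [hBapp, Algebra.smul_def, he]
  set a : k := δ θ / ((m : k) * θ) with ha
  have hcoef : ∀ j : Fin m, δ (e j) + e j * ((j : ℕ) : k) * cν = a * e j := by
    have h1 : δL s = ∑ j : Fin m,
        (δ (e j) + e j * ((j : ℕ) : k) * cν) • B j := by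
      conv_lhs => rw [hsum]
      rw [d_sum' hLa]
      apply Finset.sum_congr rfl
      intro j _
      rw [hLm, hLext, hdγpow, hBapp, Algebra.smul_def]
      push_cast [map_mul, map_add]
      ring
    have h2 : δL s = ∑ j : Fin m, (a * e j) • B j := by
      rw [hds]
      conv_lhs => rw [hsum]
      rw [Finset.mul_sum]
      apply Finset.sum_congr rfl
      intro j _
      rw [hBapp, Algebra.smul_def, map_mul]
      ring
    intro j
    have h3 : ∑ j : Fin m,
        ((δ (e j) + e j * ((j : ℕ) : k) * cν) - a * e j) • B j = 0 := by
      simp only [sub_smul]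
      rw [Finset.sum_sub_distrib, ← h1, ← h2, sub_self]
    have h4 := Fintype.linearIndependent_iff.mp B.linearIndependent _ h3 j
    exact sub_eq_zero.mp h4
  -- pick a nonzero coefficient
  have hex : ∃ j : Fin m, e j ≠ 0 := by
    by_contra hc
    push_neg at hc
    apply hs
    rw [hsum]
    simp [hc]
  obtain ⟨j, hj⟩ := hex
  set t : k := e j with ht
  -- the constant and the element
  set lam : k := t ^ m * ν ^ (j : ℕ) / θ with hlam
  set ξ : L := algebraMap k L t * γ ^ (j : ℕ) with hξ
  have hlam0 : lam ≠ 0 := by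
    rw [hlam]
    exact div_ne_zero (mul_ne_zero (pow_ne_zero _ hj) (pow_ne_zero _ hν)) hθ
  have hP5 : lam * θ = t ^ m * ν ^ (j : ℕ) := div_mul_cancel₀ _ hθ
  -- trel'
  have trel : δ t + t * ((j : ℕ) : k) * cν = a * t := hcoef j
  have trel' : (m : k) * θ * ν * δ t + t * ((j : ℕ) : k) * δ ν * θ = δ θ * ν * t := by
    rw [hcν, ha] at trel
    field_simp at trel
    have trel'' : (m : k) * ((m : k) * θ * ν * δ t + t * ((j : ℕ) : k) * δ ν * θ
        - δ θ * ν * t) = 0 := by linear_combination (m : k) * trel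
    have h0 := (mul_eq_zero.mp trel'').resolve_left hchar
    linear_combination h0
  -- δ lam = 0
  have P1 : δ (t ^ m) * t = (m : k) * t ^ m * δ t := d_pow_mul' hδm m t
  have P2 : δ (ν ^ (j : ℕ)) * ν = ((j : ℕ) : k) * ν ^ (j : ℕ) * δ ν := d_pow_mul' hδm _ ν
  have E : δ lam * θ = t ^ m * δ (ν ^ (j : ℕ)) + δ (t ^ m) * ν ^ (j : ℕ) - lam * δ θ := by
    have h5 : δ (lam * θ) = δ (t ^ m * ν ^ (j : ℕ)) := by rw [hP5]
    rw [hδm, hδm] at h5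
    linear_combination h5
  have hdlam : δ lam = 0 := by
    have h6 : δ lam * (θ ^ 2 * t * ν * (m : k)) = 0 := by
      linear_combination (θ * t * ν * (m : k)) * E + (θ * ν * ν ^ (j : ℕ) * (m : k)) * P1
        + (θ * t * (m : k) * t ^ m) * P2 + ((m : k) * ν ^ (j : ℕ) * t ^ m) * trel'
        + (-(t * ν * (m : k) * δ θ)) * hP5
    have hne6 : θ ^ 2 * t * ν * (m : k) ≠ 0 :=
      mul_ne_zero (mul_ne_zero (mul_ne_zero (pow_ne_zero _ hθ) hj) hν) hchar
    exact (mul_eq_zero.mp h6).resolve_right hne6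
  have hξm : ξ ^ m = algebraMap k L (lam * θ) := by
    rw [hξ, mul_pow, ← map_pow (algebraMap k L), ← pow_mul, mul_comm (j : ℕ) m, pow_mul, hγ,
      ← map_pow (algebraMap k L), ← map_mul (algebraMap k L), ← hP5]
  refine ⟨lam, ξ, hdlam, hξm, ?_⟩
  by_cases hj0 : (j : ℕ) = 0
  · exfalso
    apply hθn
    refine ⟨lam⁻¹, t, ?_, ?_⟩
    · have h7 := d_inv' hδm hlam0
      rw [hdlam, neg_zero] at h7
      exact (mul_eq_zero.mp h7).resolve_right (pow_ne_zero _ hlam0)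
    · have h8 : lam * θ = t ^ m := by rw [hP5, hj0, pow_zero, mul_one]
      have h9 : θ = lam⁻¹ * (lam * θ) := by field_simp
      rw [h9, h8]
  · set F := IntermediateField.adjoin k ({ξ} : Set L) with hF
    have hdvd : Module.finrank k F ∣ m :=
      ⟨Module.finrank F L, by rw [Module.finrank_mul_finrank, hLdim]⟩
    rcases hm.eq_one_or_self_of_dvd _ hdvd with h9 | h9
    · exfalso
      have hFbot : F = ⊥ := IntermediateField.finrank_eq_one_iff.mp h9
      have hmem : ξ ∈ F := IntermediateField.mem_adjoin_simple_self k ξ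
      rw [hFbot, IntermediateField.mem_bot] at hmem
      obtain ⟨w, hw⟩ := hmem
      have hγj : γ ^ (j : ℕ) = algebraMap k L (t⁻¹ * w) := by
        rw [map_mul, hw, hξ, ← mul_assoc, ← map_mul, inv_mul_cancel₀ hj, map_one, one_mul]
      set p : Polynomial k := Polynomial.X ^ (j : ℕ) - Polynomial.C (t⁻¹ * w) with hp
      have hpne : p ≠ 0 := Polynomial.X_pow_sub_C_ne_zero (Nat.pos_of_ne_zero hj0) _
      have hroot : Polynomial.aeval γ p = 0 := by
        rw [hp, map_sub, Polynomial.aeval_X_pow, Polynomial.aeval_C, hγj, sub_self]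
      have hle := minpoly.degree_le_of_ne_zero k γ hpne hroot
      have h10 : (minpoly k γ).natDegree ≤ p.natDegree := Polynomial.natDegree_le_natDegree hle
      rw [hdeg, hp, Polynomial.natDegree_X_pow_sub_C] at h10
      have := j.isLt
      omega
    · apply IntermediateField.eq_of_le_of_finrank_eq le_top
      rw [h9, IntermediateField.finrank_top', hLdim]

/-- Let `m` be prime, `A = (α,β)_{k,ω}` a symbol algebra of degree `m`
with standard derivation `dₛ`, where `α, β ∉ C_{k,δ}·(k^×)^m`. If a cyclic maximal subfield
`L = k(γ)` of degree `m` (with `γ^m = ν ∈ k^×`), equipped with the derivation `δ_L` extending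
`δ`, splits the differential algebra `(A, dₛ)`, then there exist constants `λ, μ ∈ C_{k,δ}`
and elements `ξ, η ∈ L` with `ξ^m = λ·α`, `η^m = μ·β` and `L = k(ξ) = k(η)`. -/
theorem symbolAlgebra_maximal_cyclic_splitting_subfield
    {k : Type*} [Field k] {m : ℕ} (hm : Nat.Prime m) (hchar : (m : k) ≠ 0)
    {ω : k} (hω : IsPrimitiveRoot ω m)
    {α β : k} (hα : α ≠ 0) (hβ : β ≠ 0)
    {A : Type*} [Ring A] [Algebra k A]
    (u v : A)
    (hu : u ^ m = algebraMap k A α)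
    (hv : v ^ m = algebraMap k A β)
    (hvu : v * u = ω • (u * v))
    (b : Module.Basis (Fin m × Fin m) k A)
    (hb : ∀ p : Fin m × Fin m, b p = u ^ (p.1 : ℕ) * v ^ (p.2 : ℕ))
    (δ : k → k)
    (hδa : ∀ x y : k, δ (x + y) = δ x + δ y)
    (hδm : ∀ x y : k, δ (x * y) = x * δ y + δ x * y)
    (hαn : ¬ ∃ c x : k, δ c = 0 ∧ α = c * x ^ m)
    (hβn : ¬ ∃ c x : k, δ c = 0 ∧ β = c * x ^ m)
    (ds : A → A)
    (hdsa : ∀ x y : A, ds (x + y) = ds x + ds y)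
    (hdsm : ∀ x y : A, ds (x * y) = x * ds y + ds x * y)
    (hdsk : ∀ c : k, ds (algebraMap k A c) = algebraMap k A (δ c))
    (hdsu : ds u = (δ α / ((m : k) * α)) • u)
    (hdsv : ds v = (δ β / ((m : k) * β)) • v)
    (L : Type*) [Field L] [Algebra k L]
    (hLdim : Module.finrank k L = m)
    (γ : L) (ν : k) (hν : ν ≠ 0)
    (hγ : γ ^ m = algebraMap k L ν)
    (hγgen : IntermediateField.adjoin k ({γ} : Set L) = ⊤)
    (δL : L → L)
    (hLa : ∀ x y : L, δL (x + y) = δL x + δL y)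
    (hLm : ∀ x y : L, δL (x * y) = x * δL y + δL x * y)
    (hLext : ∀ c : k, δL (algebraMap k L c) = algebraMap k L (δ c))
    (ψ : (L ⊗[k] A) ≃ₐ[L] Matrix (Fin m) (Fin m) L)
    (hψ : ∀ (e : L) (a : A),
      (ψ (e ⊗ₜ[k] a)).map δL = ψ (δL e ⊗ₜ[k] a + e ⊗ₜ[k] ds a)) :
    ∃ (lam mu : k) (ξ η : L),
      δ lam = 0 ∧ δ mu = 0 ∧
      ξ ^ m = algebraMap k L (lam * α) ∧
      η ^ m = algebraMap k L (mu * β) ∧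
      IntermediateField.adjoin k ({ξ} : Set L) = ⊤ ∧
      IntermediateField.adjoin k ({η} : Set L) = ⊤ := by
  classical
  have hδL1 : δL (1 : L) = 0 := d_one' hLm
  have key : ∀ (w : A) (θ : k), θ ≠ 0 → (¬ ∃ c x : k, δ c = 0 ∧ θ = c * x ^ m) →
      ds w = (δ θ / ((m : k) * θ)) • w → (1 : L) ⊗ₜ[k] w ≠ 0 →
      ∃ (lam : k) (ξ : L), δ lam = 0 ∧ ξ ^ m = algebraMap k L (lam * θ) ∧
        IntermediateField.adjoin k ({ξ} : Set L) = ⊤ := by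
    intro w θ hθ hθn hdsw hw0
    set c : k := δ θ / ((m : k) * θ) with hc
    have hU : (ψ ((1:L) ⊗ₜ[k] w)).map δL = algebraMap k L c • ψ ((1:L) ⊗ₜ[k] w) := by
      rw [hψ 1 w, hδL1, TensorProduct.zero_tmul, zero_add, hdsw]
      have h1 : (1:L) ⊗ₜ[k] (c • w) = algebraMap k L c • ((1:L) ⊗ₜ[k] w) := by
        rw [TensorProduct.tmul_smul, algebraMap_smul]
      rw [h1, map_smul]
    have hUne : ψ ((1:L) ⊗ₜ[k] w) ≠ 0 := fun h => hw0 (by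
      apply ψ.injective; rw [h, map_zero])
    obtain ⟨i, jj, hij⟩ : ∃ i jj, ψ ((1:L) ⊗ₜ[k] w) i jj ≠ 0 := by
      by_contra hcon
      push_neg at hcon
      exact hUne (Matrix.ext fun i j => by rw [hcon i j, Matrix.zero_apply])
    have hds' : δL (ψ ((1:L) ⊗ₜ[k] w) i jj) =
        algebraMap k L c * ψ ((1:L) ⊗ₜ[k] w) i jj := by
      have h2 := congrFun (congrFun hU i) jj
      simpa [Matrix.map_apply, Matrix.smul_apply, smul_eq_mul] using h2
    rw [hc] at hds' 
    exact aux_main hm hchar hδa hδm hLdim hν hγ hγgen hLa hLm hLext hθ hθn hij hds'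
  have hm1 : (1 : ℕ) < m := hm.one_lt
  set B2 := Algebra.TensorProduct.basis L b with hB2
  have hu0 : (1:L) ⊗ₜ[k] u ≠ 0 := by
    have h3 := B2.ne_zero (⟨1, hm1⟩, ⟨0, hm.pos⟩)
    have h4 : b (⟨1, hm1⟩, ⟨0, hm.pos⟩) = u := by rw [hb]; simp
    rwa [hB2, Algebra.TensorProduct.basis_apply, h4] at h3
  have hv0 : (1:L) ⊗ₜ[k] v ≠ 0 := by
    have h3 := B2.ne_zero (⟨0, hm.pos⟩, ⟨1, hm1⟩)
    have h4 : b (⟨0, hm.pos⟩, ⟨1, hm1⟩) = v := by rw [hb]; simp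
    rwa [hB2, Algebra.TensorProduct.basis_apply, h4] at h3
  obtain ⟨lam, ξ, h1, h2, h3⟩ := key u α hα hαn hdsu hu0
  obtain ⟨mu, η, h4, h5, h6⟩ := key v β hβ hβn hdsv hv0
  exact ⟨lam, mu, ξ, η, h1, h4, h2, h5, h3, h6⟩
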